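/- Let D be an oriented knot diagram with n ≥ 1 crossings, modeled by a Gauss code g. Then d(D) + d(−D) + 1 = n if and only if D is an alternating diagram. -/

import Mathlib

/-!
Reading the reversed diagram from the base point `-a` visits the positions `a, a - 1, …, a + 1`
of `D`, exactly the reverse of reading `D` from `a + 1`; so every crossing is warped for exactly
one of the two base points and `d_D(a + 1) + d_{-D}(-a) = n`. Hence `d(-D) = n - max d`, and the
identity says `max d = min d + 1`. Moving the base point past an over-passage raises `d` by one
and past an under-passage lowers it by one, so the values of `d` fit in two consecutive integers
exactly when over- and under-passages alternate.
-/

open Polynomial Finset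

/-- An oriented knot diagram with `n` crossings, modeled by its oriented Gauss code. -/
structure GaussCode (n : ℕ) where
  g : ZMod (2 * n) → Fin n × Bool
  o : Fin n → ZMod (2 * n)
  u : Fin n → ZMod (2 * n)
  over_iff : ∀ (c : Fin n) (e : ZMod (2 * n)), g e = (c, true) ↔ e = o c
  under_iff : ∀ (c : Fin n) (e : ZMod (2 * n)), g e = (c, false) ↔ e = u c

namespace GaussCode

variable {n : ℕ}

/-- The warping degree of the base position `e`: the number of crossings whose
under-passage occurs strictly before its over-passage when traversing the diagram
starting at `e`. -/
def d (D : GaussCode n) (e : ZMod (2 * n)) : ℕ :=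
  (Finset.univ.filter fun c : Fin n => (D.u c - e).val < (D.o c - e).val).card

/-- The warping crossing polynomial. -/
noncomputable def Xpoly (D : GaussCode n) : Polynomial ℤ :=
  ∑ c : Fin n, Polynomial.X ^ D.d (D.o c)

/-- The warping polynomial. -/
noncomputable def Wpoly (D : GaussCode n) : Polynomial ℤ :=
  ∑ k ∈ Finset.range (2 * n), Polynomial.X ^ D.d (k : ZMod (2 * n))

/-- The warping degree of the diagram: minimum over all base positions. -/
noncomputable def wdeg (D : GaussCode n) : ℕ :=
  sInf (Set.range fun e : ZMod (2 * n) => D.d e)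

/-- The diagram is alternating. -/
def Alternating (D : GaussCode n) : Prop :=
  ∀ e : ZMod (2 * n), (D.g e).2 ≠ (D.g (e + 1)).2

end GaussCode

namespace ZMod

variable {m : ℕ} [NeZero m]

theorem val_add_val_of_add_eq_neg_one {z w : ZMod m} (h : z + w = -1) :
    z.val + w.val = m - 1 := by
  obtain ⟨k, rfl⟩ := Nat.exists_eq_succ_of_ne_zero (NeZero.ne m)
  by_cases hlt : z.val + w.val < k + 1
  · rw [← val_add_of_lt hlt, h, val_neg_one]; rfl
  · have hsum := val_add_val_of_le (not_lt.1 hlt)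
    rw [h, val_neg_one] at hsum
    have := z.val_lt
    have := w.val_lt
    omega

theorem val_sub_add_one_add_one {x e : ZMod m} (hx : x ≠ e) :
    (x - (e + 1)).val + 1 = (x - e).val := by
  have hsum := val_add_val_of_add_eq_neg_one (z := x - (e + 1)) (w := e - x) (by ring)
  have hneg : (e - x).val = m - (x - e).val := by
    rw [← neg_sub, neg_val, if_neg (sub_ne_zero.2 hx)]
  have := (x - e).val_lt
  have := val_pos.2 (sub_ne_zero.2 hx)
  omega

theorem val_sub_add_one_lt_iff {x y e : ZMod m} (hx : x ≠ e) (hy : y ≠ e) :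
    (x - (e + 1)).val < (y - (e + 1)).val ↔ (x - e).val < (y - e).val := by
  have := val_sub_add_one_add_one hx
  have := val_sub_add_one_add_one hy
  omega

theorem val_sub_add_one_lt_val_self_sub_add_one {x e : ZMod m} (hx : x ≠ e) :
    (x - (e + 1)).val < (e - (e + 1)).val := by
  have hx' := val_add_val_of_add_eq_neg_one (z := x - (e + 1)) (w := e - x) (by ring)
  have he := val_add_val_of_add_eq_neg_one (z := e - (e + 1)) (w := 0) (by ring)
  have := val_pos.2 (sub_ne_zero.2 hx.symm)
  rw [val_zero] at he
  omega

theorem val_neg_sub_neg_lt_iff_not {x y a : ZMod m} (hxy : x ≠ y) :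
    (-x - -a).val < (-y - -a).val ↔ ¬(x - (a + 1)).val < (y - (a + 1)).val := by
  have hx := val_add_val_of_add_eq_neg_one (z := -x - -a) (w := x - (a + 1)) (by ring)
  have hy := val_add_val_of_add_eq_neg_one (z := -y - -a) (w := y - (a + 1)) (by ring)
  have hne : (x - (a + 1)).val ≠ (y - (a + 1)).val :=
    (val_injective m).ne (sub_left_injective.ne hxy)
  omega

theorem eq_of_forall_apply_add_one_eq {α : Type*} {f : ZMod m → α}
    (hf : ∀ x, f (x + 1) = f x) (x y : ZMod m) : f y = f x := by
  have hk : ∀ k : ℕ, f (x + k) = f x := by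
    intro k
    induction k with
    | zero => simp
    | succ k ih => rw [Nat.cast_succ, ← add_assoc, hf, ih]
  rw [← hk (y - x).val, natCast_zmod_val, add_sub_cancel]

end ZMod

namespace Finset

theorem card_filter_eq_card_filter_add_one {α : Type*} [Fintype α] [DecidableEq α]
    {p q : α → Prop} [DecidablePred p] [DecidablePred q] {a : α} (hp : ¬p a) (hq : q a)
    (hpq : ∀ x, x ≠ a → (p x ↔ q x)) : #{x | q x} = #{x | p x} + 1 := by
  rw [← card_insert_of_notMem (by simpa using hp)]
  congr 1
  ext x
  by_cases hx : x = a
  · simp [hx, hq]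
  · simp [hx, hpq x hx]

end Finset

namespace GaussCode

variable {n : ℕ} (D : GaussCode n)

theorem neZero (D : GaussCode n) : NeZero (2 * n) := ⟨by have := (D.g 0).1.pos; omega⟩

@[simp]
theorem g_o (c : Fin n) : D.g (D.o c) = (c, true) := (D.over_iff c _).2 rfl

@[simp]
theorem g_u (c : Fin n) : D.g (D.u c) = (c, false) := (D.under_iff c _).2 rfl

theorem o_injective : Function.Injective D.o := fun c c' h => by
  simpa [← h] using D.g_o c'

theorem u_injective : Function.Injective D.u := fun c c' h => by
  simpa [← h] using D.g_u c'

theorem u_ne_o (c c' : Fin n) : D.u c ≠ D.o c' := fun h => by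
  simpa [h] using D.g_u c

theorem o_fst_g {e : ZMod (2 * n)} (he : (D.g e).2 = true) : D.o (D.g e).1 = e :=
  ((D.over_iff _ e).1 (Prod.ext rfl he)).symm

theorem u_fst_g {e : ZMod (2 * n)} (he : (D.g e).2 = false) : D.u (D.g e).1 = e :=
  ((D.under_iff _ e).1 (Prod.ext rfl he)).symm

theorem d_add_one_of_over {e : ZMod (2 * n)} (he : (D.g e).2 = true) :
    D.d (e + 1) = D.d e + 1 := by
  have := D.neZero
  obtain ⟨c, rfl⟩ : ∃ c, D.o c = e := ⟨_, D.o_fst_g he⟩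
  exact card_filter_eq_card_filter_add_one (a := c) (by simp)
    (ZMod.val_sub_add_one_lt_val_self_sub_add_one (D.u_ne_o c c))
    fun x hx => (ZMod.val_sub_add_one_lt_iff (D.u_ne_o x c) (D.o_injective.ne hx)).symm

theorem d_add_one_of_under {e : ZMod (2 * n)} (he : (D.g e).2 = false) :
    D.d (e + 1) + 1 = D.d e := by
  have := D.neZero
  obtain ⟨c, rfl⟩ : ∃ c, D.u c = e := ⟨_, D.u_fst_g he⟩
  refine (card_filter_eq_card_filter_add_one (a := c)
    (ZMod.val_sub_add_one_lt_val_self_sub_add_one (D.u_ne_o c c).symm).not_gt ?_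
    fun x hx => ZMod.val_sub_add_one_lt_iff (D.u_injective.ne hx) (D.u_ne_o c x).symm).symm
  simpa [ZMod.val_pos, sub_eq_zero] using (D.u_ne_o c c).symm

theorem wdeg_le_d (e : ZMod (2 * n)) : D.wdeg ≤ D.d e := Nat.sInf_le ⟨e, rfl⟩

theorem exists_d_eq_wdeg : ∃ e, D.d e = D.wdeg := Nat.sInf_mem (Set.range_nonempty _)

theorem g_snd_of_d_eq_wdeg {e : ZMod (2 * n)} (he : D.d e = D.wdeg) : (D.g e).2 = true := by
  by_contra hunder
  have := D.d_add_one_of_under (Bool.eq_false_iff.2 hunder)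
  have := D.wdeg_le_d (e + 1)
  omega

theorem Alternating.d_add_toNat_eq {D : GaussCode n} (hD : D.Alternating)
    (e e' : ZMod (2 * n)) :
    D.d e + (D.g e).2.toNat = D.d e' + (D.g e').2.toNat := by
  have := D.neZero
  refine ZMod.eq_of_forall_apply_add_one_eq (f := fun e => D.d e + (D.g e).2.toNat)
    (fun e => ?_) e' e
  have hnext := hD e
  cases he : (D.g e).2
  · have := D.d_add_one_of_under he
    simp_all
  · have := D.d_add_one_of_over he
    simp_all

theorem Alternating.d_le_wdeg_add_one {D : GaussCode n} (hD : D.Alternating)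
    (e : ZMod (2 * n)) : D.d e ≤ D.wdeg + 1 := by
  obtain ⟨a, ha⟩ := D.exists_d_eq_wdeg
  have := hD.d_add_toNat_eq e a
  rw [D.g_snd_of_d_eq_wdeg ha, ha, Bool.toNat_true] at this
  omega

theorem alternating_iff_forall_d_le_wdeg_add_one :
    D.Alternating ↔ ∀ e, D.d e ≤ D.wdeg + 1 := by
  refine ⟨Alternating.d_le_wdeg_add_one, fun hle e heq => ?_⟩
  cases he : (D.g e).2
  · have := D.d_add_one_of_under he
    have := D.d_add_one_of_under (e := e + 1) (heq ▸ he)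
    have := D.wdeg_le_d (e + 1 + 1)
    have := hle e
    omega
  · have := D.d_add_one_of_over he
    have := D.d_add_one_of_over (e := e + 1) (heq ▸ he)
    have := D.wdeg_le_d e
    have := hle (e + 1 + 1)
    omega

def IsReverse (D Dm : GaussCode n) : Prop := ∀ e, Dm.g e = D.g (-e)

variable {D} {Dm : GaussCode n}

theorem o_reverse (h : IsReverse D Dm) (c : Fin n) : Dm.o c = -D.o c :=
  ((Dm.over_iff c _).1 (by rw [h, neg_neg, g_o])).symm

theorem u_reverse (h : IsReverse D Dm) (c : Fin n) : Dm.u c = -D.u c :=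
  ((Dm.under_iff c _).1 (by rw [h, neg_neg, g_u])).symm

theorem d_add_one_add_d_reverse (h : IsReverse D Dm) (a : ZMod (2 * n)) :
    D.d (a + 1) + Dm.d (-a) = n := by
  have := D.neZero
  have hrev : Dm.d (-a) = #{c | ¬(D.u c - (a + 1)).val < (D.o c - (a + 1)).val} := by
    unfold d
    congr 1
    ext c
    simp only [mem_filter, mem_univ, true_and, o_reverse h, u_reverse h]
    exact ZMod.val_neg_sub_neg_lt_iff_not (D.u_ne_o c c)
  rw [hrev, d, card_filter_add_card_filter_not, card_univ, Fintype.card_fin]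

theorem d_add_wdeg_reverse_le (h : IsReverse D Dm) (e : ZMod (2 * n)) :
    D.d e + Dm.wdeg ≤ n := by
  have := d_add_one_add_d_reverse h (e - 1)
  have := Dm.wdeg_le_d (-(e - 1))
  rw [sub_add_cancel] at *
  omega

theorem exists_d_add_wdeg_reverse_eq (h : IsReverse D Dm) : ∃ e, D.d e + Dm.wdeg = n := by
  obtain ⟨b, hb⟩ := Dm.exists_d_eq_wdeg
  exact ⟨-b + 1, by simpa [hb] using d_add_one_add_d_reverse h (-b)⟩

theorem wdeg_add_wdeg_reverse_add_one_eq_iff (h : IsReverse D Dm) :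
    D.wdeg + Dm.wdeg + 1 = n ↔ ∀ e, D.d e ≤ D.wdeg + 1 := by
  obtain ⟨a, ha⟩ := D.exists_d_eq_wdeg
  have hstep := D.d_add_one_of_over (D.g_snd_of_d_eq_wdeg ha)
  obtain ⟨e₀, he₀⟩ := exists_d_add_wdeg_reverse_eq h
  have := d_add_wdeg_reverse_le h (a + 1)
  refine ⟨fun heq e => ?_, fun hle => ?_⟩
  · have := d_add_wdeg_reverse_le h e
    omega
  · have := hle e₀
    omega

end GaussCode

theorem wdeg_add_wdeg_reverse_add_one_eq_iff_alternating_general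
    (n : ℕ) (D Dm : GaussCode n)
    (h : ∀ e : ZMod (2 * n), Dm.g e = D.g (-e)) :
    D.wdeg + Dm.wdeg + 1 = n ↔ D.Alternating :=
  (GaussCode.wdeg_add_wdeg_reverse_add_one_eq_iff h).trans
    D.alternating_iff_forall_d_le_wdeg_add_one.symm

/-- **Theorem (Shimizu).** For a knot diagram `D` with `n ≥ 1` crossings,
`d(D) + d(−D) + 1 = n` holds iff `D` is alternating. -/
theorem wdeg_add_wdeg_reverse_add_one_eq_iff_alternating
    (n : ℕ) (hn : 1 ≤ n) (D Dm : GaussCode n)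
    (h : ∀ e : ZMod (2 * n), Dm.g e = D.g (-e)) :
    D.wdeg + Dm.wdeg + 1 = n ↔ D.Alternating :=
  wdeg_add_wdeg_reverse_add_one_eq_iff_alternating_general n D Dm h
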